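/- Let M ∈ ℕ, let k_1, …, k_M ∈ ℕ, set n = ∏_{i=1}^M k_i, let E ⊆ ℝ be a compact set, and let φ : ℝ → ℝ be a continuous sigmoidal function. For each i = 1, …, M let f_i : ℝ^{k_i} → ℝ be continuous, and let F : ℝ^n → ℝ be the composition F = f̂_M ∘ f̂_{M−1} ∘ ⋯ ∘ f̂_1, where f̂_i denotes the blockwise induced map of f_i on ℝ^{n / (k_1⋯k_{i−1})} (so f̂_i maps ℝ^{n/(k_1⋯k_{i−1})} to ℝ^{n/(k_1⋯k_i)}, and f̂_M = f_M maps ℝ^{k_M} to ℝ). Then for every ε > 0 there exist non-overlapping CNN layers L_1, …, L_M with activation φ, where L_i has kernel length k_i and input dimension n/(k_1⋯k_{i−1}), such that |(L_M ∘ L_{M−1} ∘ ⋯ ∘ L_1)(x) − F(x)| < ε for all x ∈ E^n. -/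

import Mathlib

/-- The `j`-th block (of length `k`) of a vector `x ∈ ℝ^{k·m}`:
`blockVec k m x j = (x_{jk}, x_{jk+1}, …, x_{jk+k-1})`. -/
def blockVec (k m : ℕ) (x : EuclideanSpace ℝ (Fin (k * m))) (j : Fin m) :
    EuclideanSpace ℝ (Fin k) :=
  WithLp.toLp 2 fun (i : Fin k) => x ⟨j.1 * k + i.1, by
    have hi := i.2
    have hj := j.2
    have h1 : j.1 * k + i.1 < (j.1 + 1) * k := by
      rw [add_mul, one_mul]; omega
    have h2 : (j.1 + 1) * k ≤ m * k := Nat.mul_le_mul_right k hj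
    calc j.1 * k + i.1 < (j.1 + 1) * k := h1
      _ ≤ m * k := h2
      _ = k * m := Nat.mul_comm m k⟩

/-- The blockwise induced map `ĥ : ℝ^{k·m} → ℝ^m` of `h : ℝ^k → ℝ`:
`ĥ(x)_j = h(x_j)` where `x_j` is the `j`-th block of length `k`. -/
def blockwise (k m : ℕ) (h : EuclideanSpace ℝ (Fin k) → ℝ)
    (x : EuclideanSpace ℝ (Fin (k * m))) : EuclideanSpace ℝ (Fin m) :=
  WithLp.toLp 2 fun (j : Fin m) => h (blockVec k m x j)

/-- Composition `f̂_M ∘ ⋯ ∘ f̂_1 : ℝ^{k_1⋯k_M} → ℝ` of the blockwise induced maps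
of the scalar functions `f i : ℝ^{k_i} → ℝ`, for a list `ks = [k_1, …, k_M]` of
kernel lengths (for the empty list it is `x ↦ x_0 : ℝ^1 → ℝ`). -/
def blockComp : (ks : List ℕ) →
    ((i : Fin ks.length) → EuclideanSpace ℝ (Fin (ks.get i)) → ℝ) →
    EuclideanSpace ℝ (Fin ks.prod) → ℝ
  | [], _ => fun x => x ⟨0, Nat.one_pos⟩
  | k :: ks, f => fun x =>
      blockComp ks (fun i => f i.succ) (blockwise k ks.prod (f ⟨0, Nat.succ_pos _⟩) x)

/-- A one-hidden-layer network function on `ℝ^d` with activation `φ`: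
`g(x) = ∑_{i=1}^q β_i φ(w^i · x + b_i)`. -/
def IsOneHiddenLayerNet (d : ℕ) (φ : ℝ → ℝ)
    (g : EuclideanSpace ℝ (Fin d) → ℝ) : Prop :=
  ∃ (q : ℕ) (β : Fin q → ℝ) (w : Fin q → EuclideanSpace ℝ (Fin d)) (b : Fin q → ℝ),
    ∀ x, g x = ∑ i : Fin q, β i * φ ((inner ℝ (w i) x : ℝ) + b i)

/-!
Rescaled as `x ↦ φ (c * x)` with `c` large, a sigmoid is uniformly close to the Heaviside step
away from `0`. Placing such steps at the midpoints of a fine grid, with the increments of a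
continuous `h : ℝ → ℝ` between neighbouring grid points as coefficients, reproduces the staircase
interpolant of `h`; at each point at most one step is far from its limit, and its coefficient is
small by uniform continuity. Composed with `x ↦ ⟪w, x⟫`, this approximates every ridge function
`x ↦ exp ⟪w, x⟫` on compact sets by one-hidden-layer networks, and these exponentials span an
algebra that separates points, so by Stone–Weierstrass the networks are uniformly dense on compact
sets.

For a composition of blockwise maps, the later layers are uniformly continuous on the compact
`1`-neighbourhood of the range of the first layer; approximating the first layer finely enough
makes the error it propagates small, and the remaining layers are approximated on that
neighbourhood by induction.
-/

open Filter Set Finset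
open scoped Topology RealInnerProductSpace

lemma Finset.sum_le_add_sum_of_subsingleton {ι M : Type*} [AddCommMonoid M] [PartialOrder M]
    [IsOrderedAddMonoid M] (s : Finset ι) (p : ι → Prop) [DecidablePred p]
    (hp : ∀ i ∈ s, ∀ j ∈ s, p i → p j → i = j) {x y : ι → M} {a : M} (ha : 0 ≤ a)
    (hnear : ∀ i ∈ s, p i → x i ≤ a) (hfar : ∀ i ∈ s, ¬ p i → x i ≤ y i)
    (hy : ∀ i ∈ s, 0 ≤ y i) :
    ∑ i ∈ s, x i ≤ a + ∑ i ∈ s, y i := by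
  rw [← sum_filter_add_sum_filter_not s p]
  gcongr ?_ + ?_
  · have hcard : #(s.filter p) ≤ 1 := card_le_one.mpr fun i hi j hj => by
      rw [mem_filter] at hi hj
      exact hp i hi.1 j hj.1 hi.2 hj.2
    calc ∑ i ∈ s.filter p, x i ≤ #(s.filter p) • a :=
          sum_le_card_nsmul _ _ _ fun i hi => hnear i (mem_filter.mp hi).1 (mem_filter.mp hi).2
      _ ≤ 1 • a := nsmul_le_nsmul_left ha hcard
      _ = a := one_nsmul a
  · calc ∑ i ∈ s.filter (¬ p ·), x i ≤ ∑ i ∈ s.filter (¬ p ·), y i :=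
          sum_le_sum fun i hi => hfar i (mem_filter.mp hi).1 (mem_filter.mp hi).2
      _ ≤ ∑ i ∈ s, y i :=
          sum_le_sum_of_subset_of_nonneg (filter_subset _ _) fun i hi _ => hy i hi

noncomputable def heaviside (x : ℝ) : ℝ := if 0 ≤ x then 1 else 0

lemma abs_heaviside_le_one (x : ℝ) : |heaviside x| ≤ 1 := by
  unfold heaviside; split_ifs <;> simp

section Staircase

variable {G : Type*} [AddCommGroup G]

def stepCoeff (u : ℕ → G) : ℕ → G
  | 0 => u 0
  | j + 1 => u (j + 1) - u j

lemma sum_range_succ_stepCoeff (u : ℕ → G) (n : ℕ) :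
    ∑ j ∈ range (n + 1), stepCoeff u j = u n := by
  induction n with
  | zero => simp [stepCoeff]
  | succ n ih => rw [sum_range_succ, ih, stepCoeff, add_sub_cancel]

lemma exists_sum_stepCoeff_mul_heaviside_eq (u : ℕ → ℝ) {N : ℕ} {t : ℝ}
    (ht : t ∈ Icc (0 : ℝ) N) :
    ∃ J ≤ N, |(J : ℝ) - t| ≤ 1 / 2 ∧
      ∑ j ∈ range (N + 1), stepCoeff u j * heaviside (t - j + 1 / 2) = u J := by
  have ht0 : 0 ≤ t + 1 / 2 := by linarith [ht.1]
  have hJN : ⌊t + 1 / 2⌋₊ < N + 1 := (Nat.floor_lt ht0).mpr (by push_cast; linarith [ht.2])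
  refine ⟨⌊t + 1 / 2⌋₊, Nat.lt_succ_iff.mp hJN, ?_, ?_⟩
  · rw [abs_le]
    constructor <;> linarith [Nat.floor_le ht0, Nat.lt_floor_add_one (t + 1 / 2)]
  · have hH : ∀ j : ℕ, heaviside (t - j + 1 / 2) =
        if j ∈ range (⌊t + 1 / 2⌋₊ + 1) then 1 else 0 := fun j => by
      simp only [heaviside, Finset.mem_range, Nat.lt_succ_iff, Nat.le_floor_iff ht0,
        sub_add_eq_add_sub, sub_nonneg]
    simp only [hH, mul_ite, mul_one, mul_zero, sum_ite_mem,
      Finset.inter_eq_right.mpr (range_subset_range.mpr hJN), sum_range_succ_stepCoeff]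

end Staircase

def uniformClosureOn {X : Type*} (S : Submodule ℝ (X → ℝ)) (K : Set X) :
    Submodule ℝ (X → ℝ) where
  carrier := {g | ∀ ε > 0, ∃ n ∈ S, ∀ x ∈ K, |n x - g x| < ε}
  zero_mem' ε hε := ⟨0, S.zero_mem, fun x _ => by simpa using hε⟩
  add_mem' {g g'} hg hg' ε hε := by
    obtain ⟨n, hn, hng⟩ := hg (ε / 2) (half_pos hε)
    obtain ⟨n', hn', hng'⟩ := hg' (ε / 2) (half_pos hε)
    refine ⟨n + n', S.add_mem hn hn', fun x hx => ?_⟩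
    calc |(n + n') x - (g + g') x| = |(n x - g x) + (n' x - g' x)| := by
          simp only [Pi.add_apply]; ring_nf
      _ ≤ |n x - g x| + |n' x - g' x| := abs_add_le _ _
      _ < ε / 2 + ε / 2 := add_lt_add (hng x hx) (hng' x hx)
      _ = ε := add_halves ε
  smul_mem' r g hg ε hε := by
    obtain ⟨n, hn, hng⟩ := hg (ε / (|r| + 1)) (by positivity)
    refine ⟨r • n, S.smul_mem r hn, fun x hx => ?_⟩
    calc |(r • n) x - (r • g) x| = |r| * |n x - g x| := by
          simp only [Pi.smul_apply, smul_eq_mul, ← mul_sub, abs_mul]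
      _ ≤ |r| * (ε / (|r| + 1)) := by gcongr; exact (hng x hx).le
      _ < ε := by
          rw [mul_div_assoc', div_lt_iff₀ (by positivity)]
          nlinarith [abs_nonneg r]

section ExpInner

variable {E : Type*} [NormedAddCommGroup E] [InnerProductSpace ℝ E]

noncomputable def expInner : Multiplicative E →* C(E, ℝ) where
  toFun w := ⟨fun x => Real.exp ⟪w.toAdd, x⟫, by fun_prop⟩
  map_one' := by ext; simp
  map_mul' v w := by ext; simp [inner_add_left, Real.exp_add]

lemma expInner_ofAdd_apply (w x : E) : expInner (.ofAdd w) x = Real.exp ⟪w, x⟫ := rfl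

lemma separatesPoints_adjoin_expInner :
    (Algebra.adjoin ℝ (MonoidHom.mrange (expInner (E := E)) : Set C(E, ℝ))).SeparatesPoints := by
  intro x y hxy
  refine ⟨_, ⟨expInner (.ofAdd (x - y)), Algebra.subset_adjoin ⟨_, rfl⟩, rfl⟩, ?_⟩
  simp only [expInner_ofAdd_apply, ne_eq, Real.exp_eq_exp]
  intro h
  apply hxy
  rw [← sub_eq_zero, ← inner_self_eq_zero (𝕜 := ℝ), inner_sub_right, h, sub_self]

lemma coe_mem_of_mem_adjoin_expInner {S : Submodule ℝ (E → ℝ)}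
    (hS : ∀ w, ⇑(expInner w) ∈ S) {p : C(E, ℝ)}
    (hp : p ∈ Algebra.adjoin ℝ (MonoidHom.mrange (expInner (E := E)) : Set C(E, ℝ))) : ⇑p ∈ S := by
  rw [← Subalgebra.mem_toSubmodule, Algebra.adjoin_eq_span, Submonoid.closure_eq] at hp
  refine (Submodule.span_le (p := S.comap (ContinuousMap.coeFnLinearMap ℝ))).mpr ?_ hp
  rintro _ ⟨w, rfl⟩
  exact hS w

end ExpInner

section Sigmoid

variable {φ : ℝ → ℝ}

lemma Continuous.exists_forall_abs_le_of_tendsto (hφc : Continuous φ) {a b : ℝ}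
    (hφa : Tendsto φ atTop (𝓝 a)) (hφb : Tendsto φ atBot (𝓝 b)) : ∃ B, ∀ x, |φ x| ≤ B := by
  obtain ⟨B, hB⟩ := isBounded_iff_forall_norm_le.mp
    (hφc.isBounded_range_iff_isBigO_atTop_atBot.mpr ⟨hφa.isBigO_one ℝ, hφb.isBigO_one ℝ⟩)
  exact ⟨B, fun x => hB _ (mem_range_self x)⟩

lemma exists_forall_abs_comp_mul_sub_heaviside_le (hφ1 : Tendsto φ atTop (𝓝 1))
    (hφ0 : Tendsto φ atBot (𝓝 0)) {η τ : ℝ} (hη : 0 < η) (hτ : 0 < τ) :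
    ∃ c : ℝ, ∀ x, η ≤ |x| → |φ (c * x) - heaviside x| ≤ τ := by
  obtain ⟨A, hA⟩ := eventually_atTop.mp (hφ1.eventually (Metric.closedBall_mem_nhds 1 hτ))
  obtain ⟨A', hA'⟩ := eventually_atBot.mp (hφ0.eventually (Metric.closedBall_mem_nhds 0 hτ))
  refine ⟨(|A| + |A'|) / η, fun x hx => ?_⟩
  have hscale : |A| + |A'| ≤ (|A| + |A'|) / η * |x| := by
    rw [div_mul_eq_mul_div, le_div_iff₀ hη]
    gcongr
  rcases le_or_gt 0 x with hx0 | hx0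
  · rw [abs_of_nonneg hx0] at hscale
    rw [heaviside, if_pos hx0, ← Real.dist_eq]
    exact hA _ (by linarith [le_abs_self A, abs_nonneg A'])
  · rw [abs_of_neg hx0] at hscale
    rw [heaviside, if_neg hx0.not_ge, ← Real.dist_eq]
    exact hA' _ (by linarith [neg_abs_le A', abs_nonneg A])

lemma sum_abs_stepCoeff_mul_sub_heaviside_le {B : ℝ} (hB : ∀ x, |φ x| ≤ B) {u : ℝ → ℝ} {N : ℕ}
    {δ : ℝ} (hu : ∀ t ∈ Icc (0 : ℝ) N, ∀ t' ∈ Icc (0 : ℝ) N, |t - t'| ≤ 1 → |u t - u t'| ≤ δ)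
    {c τ : ℝ} (hc : ∀ x, 1 / 2 ≤ |x| → |φ (c * x) - heaviside x| ≤ τ) (hτ : 0 ≤ τ) {t : ℝ}
    (ht : t ∈ Icc (0 : ℝ) N) :
    ∑ j ∈ range (N + 1), |stepCoeff (fun j => u j) j *
        (φ (c * (t - j + 1 / 2)) - heaviside (t - j + 1 / 2))|
      ≤ δ * (B + 1) + ∑ j ∈ range (N + 1), |stepCoeff (fun j => u j) j| * τ := by
  have hδ : 0 ≤ δ := (abs_nonneg _).trans (hu 0 (by simp) 0 (by simp) (by simp))
  have hB0 : 0 ≤ B := (abs_nonneg _).trans (hB 0)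
  -- at most one midpoint `j - 1/2` is within `1/2` of `t`, and it is not the one with `j = 0`,
  -- whose coefficient `u 0` need not be small
  refine sum_le_add_sum_of_subsingleton _ (fun j : ℕ => |t - j + 1 / 2| < 1 / 2)
    (fun i _ j _ hi hj => ?_) (by positivity) (fun j hj hlt => ?_)
    (fun j _ hle => ?_) fun j _ => by positivity
  · have h : |((i : ℤ) - j : ℤ)| < 1 := by
      have : |(i : ℝ) - j| < 1 := by
        rw [abs_lt] at hi hj ⊢
        constructor <;> linarith
      exact_mod_cast this
    have := Int.abs_lt_one_iff.mp h
    omega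
  · obtain ⟨i, rfl⟩ : ∃ i, j = i + 1 := Nat.exists_eq_succ_of_ne_zero fun hj0 => by
      subst hj0
      rw [Nat.cast_zero, abs_lt] at hlt
      linarith [ht.1]
    have hiN : (i : ℝ) + 1 ≤ N := by exact_mod_cast Finset.mem_range_succ_iff.mp hj
    rw [abs_mul]
    gcongr
    · exact hu _ ⟨by positivity, by push_cast; linarith⟩ _ ⟨by positivity, by linarith⟩
        (by push_cast; simp)
    · exact (abs_sub _ _).trans (add_le_add (hB _) (abs_heaviside_le_one _))
  · rw [abs_mul]
    exact mul_le_mul_of_nonneg_left (hc _ (not_lt.mp hle)) (abs_nonneg _)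

lemma exists_sigmoid_staircase_approx {B : ℝ} (hB : ∀ x, |φ x| ≤ B)
    (hφ1 : Tendsto φ atTop (𝓝 1)) (hφ0 : Tendsto φ atBot (𝓝 0)) {u : ℝ → ℝ} {N : ℕ} {δ : ℝ}
    (hu : ∀ t ∈ Icc (0 : ℝ) N, ∀ t' ∈ Icc (0 : ℝ) N, |t - t'| ≤ 1 → |u t - u t'| ≤ δ)
    {ε : ℝ} (hε : 0 < ε) :
    ∃ c : ℝ, ∀ t ∈ Icc (0 : ℝ) N,
      |∑ j ∈ range (N + 1), stepCoeff (fun j => u j) j * φ (c * (t - j + 1 / 2)) - u t|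
        < δ * (B + 2) + ε := by
  set β := stepCoeff (fun j : ℕ => u j)
  set S := ∑ j ∈ range (N + 1), |β j|
  have hS : 0 ≤ S := sum_nonneg fun j _ => abs_nonneg _
  obtain ⟨c, hc⟩ := exists_forall_abs_comp_mul_sub_heaviside_le hφ1 hφ0 one_half_pos
    (div_pos hε (by positivity : 0 < S + 1))
  refine ⟨c, fun t ht => ?_⟩
  obtain ⟨J, hJN, hJt, hstair⟩ := exists_sum_stepCoeff_mul_heaviside_eq (fun j : ℕ => u j) ht
  set e : ℕ → ℝ := fun j => φ (c * (t - j + 1 / 2)) - heaviside (t - j + 1 / 2)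
  have herr : ∑ j ∈ range (N + 1), |β j * e j| < δ * (B + 1) + ε :=
    calc ∑ j ∈ range (N + 1), |β j * e j|
        ≤ δ * (B + 1) + ∑ j ∈ range (N + 1), |β j| * (ε / (S + 1)) :=
          sum_abs_stepCoeff_mul_sub_heaviside_le hB hu hc (by positivity) ht
      _ = δ * (B + 1) + ε * (S / (S + 1)) := by rw [← sum_mul]; ring
      _ < δ * (B + 1) + ε := by
          gcongr
          exact mul_lt_of_lt_one_right hε ((div_lt_one (by positivity)).mpr (lt_add_one S))
  have hJ : |u J - u t| ≤ δ :=
    hu _ ⟨J.cast_nonneg, by exact_mod_cast hJN⟩ t ht (hJt.trans (by norm_num))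
  calc |∑ j ∈ range (N + 1), β j * φ (c * (t - j + 1 / 2)) - u t|
      = |∑ j ∈ range (N + 1), β j * e j + (u J - u t)| := by
        rw [← hstair]
        simp only [e, β, mul_sub, sum_sub_distrib]
        ring_nf
    _ ≤ ∑ j ∈ range (N + 1), |β j * e j| + δ :=
        (abs_add_le _ _).trans (add_le_add (abs_sum_le_sum_abs _ _) hJ)
    _ < δ * (B + 2) + ε := by linarith

theorem exists_sigmoid_sum_approx (hφc : Continuous φ) (hφ1 : Tendsto φ atTop (𝓝 1))
    (hφ0 : Tendsto φ atBot (𝓝 0)) {h : ℝ → ℝ} {a b : ℝ} (hab : a < b)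
    (hh : ContinuousOn h (Icc a b)) {ε : ℝ} (hε : 0 < ε) :
    ∃ (q : ℕ) (β c t : Fin q → ℝ), ∀ s ∈ Icc a b, |∑ i, β i * φ (c i * s + t i) - h s| < ε := by
  obtain ⟨B, hB⟩ := hφc.exists_forall_abs_le_of_tendsto hφ1 hφ0
  have hB0 : 0 ≤ B := (abs_nonneg _).trans (hB 0)
  obtain ⟨δ', hδ', hmod⟩ := Metric.uniformContinuousOn_iff.mp
    (isCompact_Icc.uniformContinuousOn_of_continuous hh) (ε / (2 * (B + 2))) (by positivity)
  obtain ⟨N, hN⟩ := exists_nat_gt ((b - a) / δ')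
  have hN0 : (0 : ℝ) < N := (div_pos (sub_pos.mpr hab) hδ').trans hN
  set Δ := (b - a) / N
  have hΔ : 0 < Δ := div_pos (sub_pos.mpr hab) hN0
  have hΔδ' : Δ < δ' := by
    rw [div_lt_iff₀ hN0]
    rwa [div_lt_iff₀ hδ', mul_comm] at hN
  have hgrid : ∀ t ∈ Icc (0 : ℝ) N, a + t * Δ ∈ Icc a b := fun t ht => by
    have hNΔ : N * Δ = b - a := mul_div_cancel₀ _ hN0.ne'
    constructor <;> nlinarith [ht.1, ht.2]
  have hu : ∀ t ∈ Icc (0 : ℝ) N, ∀ t' ∈ Icc (0 : ℝ) N, |t - t'| ≤ 1 →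
      |h (a + t * Δ) - h (a + t' * Δ)| ≤ ε / (2 * (B + 2)) := by
    intro t ht t' ht' htt'
    refine (hmod _ (hgrid t ht) _ (hgrid t' ht') ?_).le
    rw [Real.dist_eq, show a + t * Δ - (a + t' * Δ) = (t - t') * Δ by ring, abs_mul,
      abs_of_pos hΔ]
    nlinarith
  obtain ⟨c, hc⟩ := exists_sigmoid_staircase_approx hB hφ1 hφ0 hu (half_pos hε)
  refine ⟨N + 1, fun j => stepCoeff (fun j : ℕ => h (a + j * Δ)) j, fun _ => c / Δ,
    fun j => c * (1 / 2 - j - a / Δ), fun s hs => ?_⟩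
  have hts : (s - a) / Δ ∈ Icc (0 : ℝ) N := by
    constructor
    · exact div_nonneg (by linarith [hs.1]) hΔ.le
    · rw [div_le_iff₀ hΔ, mul_div_cancel₀ _ hN0.ne']
      linarith [hs.2]
  have key := hc _ hts
  rw [show a + (s - a) / Δ * Δ = s by field_simp; ring] at key
  rw [Fin.sum_univ_eq_sum_range
    (fun j => stepCoeff (fun j : ℕ => h (a + j * Δ)) j * φ (c / Δ * s + c * (1 / 2 - j - a / Δ)))]
  calc _ = |∑ j ∈ range (N + 1), stepCoeff (fun j : ℕ => h (a + j * Δ)) j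
          * φ (c * ((s - a) / Δ - j + 1 / 2)) - h s| := by
        congr 3 with j
        congr 2
        ring
    _ < ε / (2 * (B + 2)) * (B + 2) + ε / 2 := key
    _ = ε := by field_simp; ring

variable {d : ℕ}

def oneHiddenLayerNets (d : ℕ) (φ : ℝ → ℝ) : Submodule ℝ (EuclideanSpace ℝ (Fin d) → ℝ) :=
  Submodule.span ℝ (Set.range fun p : EuclideanSpace ℝ (Fin d) × ℝ => fun x => φ (⟪p.1, x⟫ + p.2))

lemma mem_oneHiddenLayerNets_iff {g : EuclideanSpace ℝ (Fin d) → ℝ} :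
    g ∈ oneHiddenLayerNets d φ ↔ IsOneHiddenLayerNet d φ g := by
  constructor
  · rw [oneHiddenLayerNets, Submodule.mem_span_set']
    rintro ⟨q, β, p, rfl⟩
    choose wb hwb using fun i => (p i).2
    exact ⟨q, β, fun i => (wb i).1, fun i => (wb i).2, fun x => by simp [← hwb]⟩
  · rintro ⟨q, β, w, b, hg⟩
    rw [show g = ∑ i, β i • fun x => φ (⟪w i, x⟫ + b i) from funext fun x => by simp [hg]]
    exact Submodule.sum_mem _ fun i _ =>
      Submodule.smul_mem _ _ (Submodule.subset_span ⟨(w i, b i), rfl⟩)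

lemma comp_inner_mem_uniformClosureOn (hφc : Continuous φ) (hφ1 : Tendsto φ atTop (𝓝 1))
    (hφ0 : Tendsto φ atBot (𝓝 0)) {K : Set (EuclideanSpace ℝ (Fin d))}
    (hK : Bornology.IsBounded K) {h : ℝ → ℝ} (hh : Continuous h) (w : EuclideanSpace ℝ (Fin d)) :
    (fun x => h ⟪w, x⟫) ∈ uniformClosureOn (oneHiddenLayerNets d φ) K := by
  intro ε hε
  obtain ⟨C, hC⟩ := isBounded_iff_forall_norm_le.mp hK
  set R := |‖w‖ * C| + 1
  obtain ⟨q, β, c, t, hβ⟩ := exists_sigmoid_sum_approx hφc hφ1 hφ0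
    (neg_lt_self (by positivity : 0 < R)) hh.continuousOn hε
  refine ⟨fun x => ∑ i, β i * φ (⟪c i • w, x⟫ + t i),
    mem_oneHiddenLayerNets_iff.mpr ⟨q, β, fun i => c i • w, t, fun x => rfl⟩, fun x hx => ?_⟩
  have hwx : ⟪w, x⟫ ∈ Icc (-R) R := by
    rw [Set.mem_Icc, ← abs_le]
    calc |⟪w, x⟫| ≤ ‖w‖ * ‖x‖ := abs_real_inner_le_norm w x
      _ ≤ ‖w‖ * C := by gcongr; exact hC x hx
      _ ≤ R := (le_abs_self _).trans (lt_add_one _).le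
  simpa only [real_inner_smul_left] using hβ _ hwx

theorem exists_isOneHiddenLayerNet_approx (hφc : Continuous φ)
    (hφ1 : Tendsto φ atTop (𝓝 1)) (hφ0 : Tendsto φ atBot (𝓝 0))
    {K : Set (EuclideanSpace ℝ (Fin d))} (hK : IsCompact K)
    {F : EuclideanSpace ℝ (Fin d) → ℝ} (hF : Continuous F) {ε : ℝ} (hε : 0 < ε) :
    ∃ g, IsOneHiddenLayerNet d φ g ∧ ∀ x ∈ K, |g x - F x| < ε := by
  obtain ⟨p, hpA, hpF⟩ :=
    ContinuousMap.exists_mem_subalgebra_near_continuous_of_isCompact_of_separatesPoints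
      separatesPoints_adjoin_expInner ⟨F, hF⟩ hK (half_pos hε)
  obtain ⟨g, hg, hgp⟩ := coe_mem_of_mem_adjoin_expInner
    (fun w => comp_inner_mem_uniformClosureOn hφc hφ1 hφ0 hK.isBounded Real.continuous_exp
      w.toAdd) hpA (ε / 2) (half_pos hε)
  refine ⟨g, mem_oneHiddenLayerNets_iff.mp hg, fun x hx => ?_⟩
  calc |g x - F x| ≤ |g x - p x| + |p x - F x| := abs_sub_le _ _ _
    _ < ε / 2 + ε / 2 := add_lt_add (hgp x hx) (hpF x hx)
    _ = ε := add_halves ε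

end Sigmoid

lemma isCompact_setOf_forall_mem {ι : Type*} [Fintype ι] {K : Set ℝ} (hK : IsCompact K) :
    IsCompact {y : EuclideanSpace ℝ ι | ∀ i, y i ∈ K} := by
  convert (PiLp.homeomorph 2 _).isCompact_preimage.mpr (isCompact_univ_pi fun (_ : ι) => hK)
  ext
  simp [PiLp.homeomorph]

lemma exists_pos_abs_sub_lt_of_forall_abs_sub_lt {ι : Type*} [Fintype ι] {K : Set ℝ}
    (hK : IsCompact K) {F : EuclideanSpace ℝ ι → ℝ} (hF : Continuous F) {ε : ℝ} (hε : 0 < ε) :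
    ∃ η > 0, ∀ y z : EuclideanSpace ℝ ι, (∀ i, y i ∈ K) → (∀ i, z i ∈ K) →
      (∀ i, |z i - y i| < η) → |F z - F y| < ε := by
  obtain ⟨η, hη, hFη⟩ := Metric.uniformContinuousOn_iff.mp
    ((isCompact_univ_pi fun (_ : ι) => hK).uniformContinuousOn_of_continuous
      (hF.comp (PiLp.continuous_toLp 2 _)).continuousOn) ε hε
  refine ⟨η, hη, fun y z hy hz hzy => ?_⟩
  have := hFη z.ofLp (fun i _ => hz i) y.ofLp (fun i _ => hy i)
    ((dist_pi_lt_iff hη).mpr fun i => by rw [Real.dist_eq]; exact hzy i)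
  simpa [Real.dist_eq] using this

lemma continuous_blockwise (k m : ℕ) {h : EuclideanSpace ℝ (Fin k) → ℝ} (hh : Continuous h) :
    Continuous (blockwise k m h) := by
  unfold blockwise blockVec
  fun_prop

lemma continuous_blockComp : ∀ (ks : List ℕ)
    (f : (i : Fin ks.length) → EuclideanSpace ℝ (Fin (ks.get i)) → ℝ),
    (∀ i, Continuous (f i)) → Continuous (blockComp ks f)
  | [], _, _ => (EuclideanSpace.proj _).continuous
  | k :: ks, _, hf => (continuous_blockComp ks _ fun i => hf i.succ).comp
      (continuous_blockwise k ks.prod (hf _))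

theorem exists_blockComp_cons_approx {φ : ℝ → ℝ} (hφc : Continuous φ)
    (hφ1 : Tendsto φ atTop (𝓝 1)) (hφ0 : Tendsto φ atBot (𝓝 0)) {k : ℕ} {ks : List ℕ}
    (ih : ∀ K : Set ℝ, IsCompact K →
      ∀ f : (i : Fin ks.length) → EuclideanSpace ℝ (Fin (ks.get i)) → ℝ,
        (∀ i, Continuous (f i)) → ∀ ε : ℝ, 0 < ε →
      ∃ g : (i : Fin ks.length) → EuclideanSpace ℝ (Fin (ks.get i)) → ℝ,
        (∀ i, IsOneHiddenLayerNet (ks.get i) φ (g i)) ∧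
        ∀ x : EuclideanSpace ℝ (Fin ks.prod), (∀ i, x i ∈ K) →
          |blockComp ks g x - blockComp ks f x| < ε)
    {K : Set ℝ} (hK : IsCompact K)
    {f : (i : Fin (k :: ks).length) → EuclideanSpace ℝ (Fin ((k :: ks).get i)) → ℝ}
    (hf : ∀ i, Continuous (f i)) {ε : ℝ} (hε : 0 < ε) :
    ∃ g : (i : Fin (k :: ks).length) → EuclideanSpace ℝ (Fin ((k :: ks).get i)) → ℝ,
      (∀ i, IsOneHiddenLayerNet ((k :: ks).get i) φ (g i)) ∧
      ∀ x : EuclideanSpace ℝ (Fin (k :: ks).prod), (∀ i, x i ∈ K) →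
        |blockComp (k :: ks) g x - blockComp (k :: ks) f x| < ε := by
  set f₀ := f ⟨0, Nat.succ_pos _⟩
  set F := blockComp ks fun i => f i.succ
  -- the later layers only ever see values within distance `1` of the range of `f₀`
  set K' := Metric.cthickening 1 (f₀ '' {y | ∀ i, y i ∈ K})
  have hK' : IsCompact K' := ((isCompact_setOf_forall_mem hK).image (hf _)).cthickening
  obtain ⟨η, hη, hFη⟩ := exists_pos_abs_sub_lt_of_forall_abs_sub_lt hK'
    (continuous_blockComp ks _ fun i => hf i.succ) (half_pos hε)
  obtain ⟨g₀, hg₀, hg₀f⟩ := exists_isOneHiddenLayerNet_approx hφc hφ1 hφ0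
    (isCompact_setOf_forall_mem hK) (hf _) (lt_min hη one_pos)
  obtain ⟨g, hg, hgf⟩ := ih K' hK' (fun i => f i.succ) (fun i => hf i.succ) _ (half_pos hε)
  refine ⟨Fin.cases g₀ g, Fin.cases hg₀ hg, fun x hx => ?_⟩
  set y := blockwise k ks.prod f₀ x
  set z := blockwise k ks.prod g₀ x
  have hblock : ∀ j, blockVec k ks.prod x j ∈ {y | ∀ i, y i ∈ K} := fun j i => hx _
  have hzy : ∀ j, |z j - y j| < min η 1 := fun j => hg₀f _ (hblock j)
  have hy : ∀ j, y j ∈ K' := fun j => Metric.self_subset_cthickening _ ⟨_, hblock j, rfl⟩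
  have hz : ∀ j, z j ∈ K' := fun j => Metric.mem_cthickening_of_dist_le _ _ _ _
    ⟨_, hblock j, rfl⟩ (by rw [Real.dist_eq]; exact (hzy j).le.trans (min_le_right _ _))
  calc |blockComp ks g z - F y| ≤ |blockComp ks g z - F z| + |F z - F y| := abs_sub_le _ _ _
    _ < ε / 2 + ε / 2 :=
        add_lt_add (hgf z hz) (hFη y z hy hz fun j => (hzy j).trans_le (min_le_left _ _))
    _ = ε := add_halves ε

theorem nonoverlapping_cnn_deep_approx_general
    (ks : List ℕ)
    (E : Set ℝ) (hE : IsCompact E)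
    (φ : ℝ → ℝ) (hφc : Continuous φ)
    (hφ1 : Filter.Tendsto φ Filter.atTop (nhds 1))
    (hφ0 : Filter.Tendsto φ Filter.atBot (nhds 0))
    (f : (i : Fin ks.length) → EuclideanSpace ℝ (Fin (ks.get i)) → ℝ)
    (hf : ∀ i, Continuous (f i))
    (ε : ℝ) (hε : 0 < ε) :
    ∃ g : (i : Fin ks.length) → EuclideanSpace ℝ (Fin (ks.get i)) → ℝ,
      (∀ i, IsOneHiddenLayerNet (ks.get i) φ (g i)) ∧
      ∀ x : EuclideanSpace ℝ (Fin ks.prod), (∀ i, x i ∈ E) →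
        |blockComp ks g x - blockComp ks f x| < ε := by
  induction ks generalizing E ε with
  | nil => exact ⟨fun i => i.elim0, fun i => i.elim0, fun x _ => by simpa [blockComp] using hε⟩
  | cons k ks ih => exact exists_blockComp_cons_approx hφc hφ1 hφ0 ih hE hf hε

/-- Theorem 2 of the paper: given kernel lengths `k_1, …, k_M`
(`M ≥ 1`), `n = ∏ k_i`, a compact `E ⊆ ℝ`, a continuous sigmoidal `φ`, and
continuous `f_i : ℝ^{k_i} → ℝ`, the composition `F = f̂_M ∘ ⋯ ∘ f̂_1 : ℝ^n → ℝ`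
of the blockwise induced maps can be approximated uniformly on `E^n` by a
composition of non-overlapping CNN layers `L_i = ĝ_i`, where each `g_i` is a
one-hidden-layer network function on `ℝ^{k_i}` with activation `φ`. -/
theorem nonoverlapping_cnn_deep_approx
    (ks : List ℕ) (hM : 0 < ks.length)
    (E : Set ℝ) (hE : IsCompact E)
    (φ : ℝ → ℝ) (hφc : Continuous φ)
    (hφ1 : Filter.Tendsto φ Filter.atTop (nhds 1))
    (hφ0 : Filter.Tendsto φ Filter.atBot (nhds 0))
    (f : (i : Fin ks.length) → EuclideanSpace ℝ (Fin (ks.get i)) → ℝ)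
    (hf : ∀ i, Continuous (f i))
    (ε : ℝ) (hε : 0 < ε) :
    ∃ g : (i : Fin ks.length) → EuclideanSpace ℝ (Fin (ks.get i)) → ℝ,
      (∀ i, IsOneHiddenLayerNet (ks.get i) φ (g i)) ∧
      ∀ x : EuclideanSpace ℝ (Fin ks.prod), (∀ i, x i ∈ E) →
        |blockComp ks g x - blockComp ks f x| < ε :=
  nonoverlapping_cnn_deep_approx_general ks E hE φ hφc hφ1 hφ0 f hf ε hε
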